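/- arXiv:2401.17119 — 2 statements merged into one kernel-verified Lean document; each statement's English description precedes it below -/
import Mathlib

section
/- Every isolated point of the space S^d (with the Hausdorff metric δ_H) is a shift of finite type. -/
/-- The group `ℤ^d`. -/
abbrev ZD (d : ℕ) := Fin d → ℤ

/-- A configuration is a map `ℤ^d → ℤ`. -/
abbrev Config (d : ℕ) := ZD d → ℤ

/-- The shift map `σ^u`, defined by `σ^u(x)_v = x_{u+v}`. -/
def shiftMap {d : ℕ} (u : ZD d) (x : Config d) : Config d := fun v => x (u + v)

/-- The sup norm `‖·‖_∞` on `ℤ^d`, valued in `ℕ`. -/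
def normInf {d : ℕ} (n : ZD d) : ℕ := Finset.univ.sup fun i => (n i).natAbs

open Classical in
/-- The metric `δ` on configurations: `δ(x,y) = 2^{-min{‖n‖_∞ : x_n ≠ y_n}}`, `δ(x,x) = 0`. -/
noncomputable def deltaDist {d : ℕ} (x y : Config d) : ℝ :=
  if x = y then 0
  else (2 : ℝ) ^ (-((sInf {m : ℕ | ∃ n : ZD d, normInf n = m ∧ x n ≠ y n} : ℕ) : ℤ))

/-- The closure of a set of configurations with respect to the metric `δ`. -/
def deltaClosure {d : ℕ} (A : Set (Config d)) : Set (Config d) :=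
  {x | ∀ ε : ℝ, 0 < ε → ∃ a ∈ A, deltaDist x a < ε}

/-- A set of configurations is closed for `δ` when it contains all its limit points. -/
def IsDeltaClosed {d : ℕ} (A : Set (Config d)) : Prop := deltaClosure A ⊆ A

/-- A `d`-dimensional shift: a nonempty set of configurations over a common finite
alphabet, closed for `δ` and invariant under every shift map. -/
def IsShift {d : ℕ} (X : Set (Config d)) : Prop :=
  X.Nonempty ∧ (∃ A : Finset ℤ, ∀ x ∈ X, ∀ v : ZD d, x v ∈ A) ∧ IsDeltaClosed X ∧
    ∀ u : ZD d, ∀ x ∈ X, shiftMap u x ∈ X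

/-- The Hausdorff metric `δ_H` on the space of shifts. -/
noncomputable def deltaH {d : ℕ} (X Z : Set (Config d)) : ℝ :=
  max (⨆ x : X, ⨅ z : Z, deltaDist (x : Config d) (z : Config d))
      (⨆ z : Z, ⨅ x : X, deltaDist (x : Config d) (z : Config d))

/-- A subsystem of a shift `X`: a nonempty closed shift-invariant subset of `X`. -/
def IsSubsystem {d : ℕ} (Z X : Set (Config d)) : Prop :=
  Z.Nonempty ∧ Z ⊆ X ∧ IsDeltaClosed Z ∧ ∀ u : ZD d, ∀ z ∈ Z, shiftMap u z ∈ Z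

/-- A maximal subsystem of `X`: a proper subsystem such that any subsystem strictly
between it and `X` equals `X`. -/
def IsMaximalSubsystem {d : ℕ} (Z X : Set (Config d)) : Prop :=
  IsSubsystem Z X ∧ Z ≠ X ∧ ∀ Z', IsSubsystem Z' X → Z ⊂ Z' → Z' = X

/-- An outcast of `X`: a proper subsystem contained in no maximal subsystem of `X`. -/
def IsOutcast {d : ℕ} (Z X : Set (Config d)) : Prop :=
  IsSubsystem Z X ∧ Z ≠ X ∧ ∀ M, IsMaximalSubsystem M X → ¬ Z ⊆ M

/-- A pattern with finite support `U` (given by the values of `p` on `U`) appears in the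
configuration `x`. -/
def PatternAppears {d : ℕ} (U : Finset (ZD d)) (p : ZD d → ℤ) (x : Config d) : Prop :=
  ∃ u : ZD d, ∀ v ∈ U, x (u + v) = p v

/-- The set of configurations over the alphabet `A` avoiding every pattern in `F`. -/
def XofF {d : ℕ} (A : Finset ℤ) (F : Set (Finset (ZD d) × (ZD d → ℤ))) : Set (Config d) :=
  {x | (∀ v : ZD d, x v ∈ A) ∧ ∀ q ∈ F, ¬ PatternAppears q.1 q.2 x}

/-- A shift of finite type: defined by a finite alphabet and a finite set of forbidden
patterns. -/
def IsSFT {d : ℕ} (X : Set (Config d)) : Prop :=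
  ∃ (A : Finset ℤ) (F : Finset (Finset (ZD d) × (ZD d → ℤ))), X = XofF A (F : Set _)

/-- `X` is an isolated point of the subspace `S` (with the Hausdorff metric `δ_H`). -/
def IsolatedIn {d : ℕ} (S : Set (Set (Config d))) (X : Set (Config d)) : Prop :=
  X ∈ S ∧ ∃ ε : ℝ, 0 < ε ∧ ∀ Z ∈ S, deltaH X Z < ε → Z = X

/-- The orbit of a configuration under the shift action. -/
def orbit {d : ℕ} (x : Config d) : Set (Config d) := {y | ∃ u : ZD d, y = shiftMap u x}

/-- A shift is transitive when some point has dense orbit. -/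
def IsTransitive {d : ℕ} (X : Set (Config d)) : Prop :=
  IsShift X ∧ ∃ x ∈ X, X ⊆ deltaClosure (orbit x)

/-- A shift is minimal when its only subsystem is itself. -/
def IsMinimalShift {d : ℕ} (X : Set (Config d)) : Prop :=
  IsShift X ∧ ∀ Z, IsSubsystem Z X → Z = X

lemma deltaDist_nonneg {d : ℕ} (x y : Config d) : 0 ≤ deltaDist x y := by
  unfold deltaDist; split_ifs with h
  · exact le_refl 0
  · positivity

lemma deltaDist_self {d : ℕ} (x : Config d) : deltaDist x x = 0 := by
  simp [deltaDist]

lemma deltaDist_lt_iff {d : ℕ} (x a : Config d) (m : ℕ) :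
    deltaDist x a < (2:ℝ) ^ (-(m:ℤ)) ↔ ∀ n : ZD d, normInf n ≤ m → x n = a n := by
  unfold deltaDist
  split_ifs with hxa
  · subst hxa
    constructor
    · intro _ n _; rfl
    · intro _; positivity
  · have hS : {k : ℕ | ∃ n : ZD d, normInf n = k ∧ x n ≠ a n}.Nonempty := by
      obtain ⟨n, hn⟩ := Function.ne_iff.mp hxa
      exact ⟨normInf n, n, rfl, hn⟩
    rw [zpow_lt_zpow_iff_right₀ (by norm_num : (1:ℝ) < 2), neg_lt_neg_iff]
    constructor
    · intro h n hnm; by_contra hne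
      have := Nat.sInf_le (show normInf n ∈ {k : ℕ | ∃ n : ZD d, normInf n = k ∧ x n ≠ a n} from ⟨n, rfl, hne⟩)
      exact absurd (Int.ofNat_lt.mp h) (by omega)
    · intro h
      obtain ⟨n, hn, hne⟩ := Nat.sInf_mem hS
      have hmn : ¬ normInf n ≤ m := fun hle => hne (h n hle)
      rw [← hn]
      exact_mod_cast by omega

lemma XofF_isDeltaClosed {d : ℕ} (A : Finset ℤ) (F : Set (Finset (ZD d) × (ZD d → ℤ))) :
    IsDeltaClosed (XofF A F) := by
  intro x hx
  constructor
  · intro v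
    obtain ⟨a, ha, hlt⟩ := hx ((2:ℝ) ^ (-(normInf v : ℤ))) (by positivity)
    rw [deltaDist_lt_iff] at hlt
    rw [hlt v le_rfl]
    exact ha.1 v
  · rintro q hq ⟨u, hu⟩
    set m : ℕ := q.1.sup (fun v => normInf (u + v)) with hm
    obtain ⟨a, ha, hlt⟩ := hx ((2:ℝ) ^ (-(m : ℤ))) (by positivity)
    rw [deltaDist_lt_iff] at hlt
    exact ha.2 q hq ⟨u, fun v hv =>
      (hlt (u + v) (hm ▸ Finset.le_sup (f := fun v => normInf (u + v)) hv)).symm.trans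
        (hu v hv)⟩

lemma XofF_shiftInvariant {d : ℕ} (A : Finset ℤ) (F : Set (Finset (ZD d) × (ZD d → ℤ)))
    (u : ZD d) (x : Config d) (hx : x ∈ XofF A F) : shiftMap u x ∈ XofF A F := by
  refine ⟨fun v => hx.1 (u + v), ?_⟩
  rintro q hq ⟨w, hw⟩
  refine hx.2 q hq ⟨u + w, fun v hv => ?_⟩
  rw [add_assoc]
  exact hw v hv

/-- Every isolated point of the space `S^d` is a shift of finite type. -/
theorem isolated_implies_SFT
    (d : ℕ) (hd : 1 ≤ d) (X : Set (Config d))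
    (h : IsolatedIn {Y : Set (Config d) | IsShift Y} X) :
    IsSFT X := by
  classical
  obtain ⟨hXS, ε, hε, hiso⟩ := h
  obtain ⟨hne, ⟨A, hA⟩, hclosed, hinv⟩ := hXS
  obtain ⟨N, hN⟩ := exists_pow_lt_of_lt_one hε (by norm_num : (1/2 : ℝ) < 1)
  have hN' : (2:ℝ) ^ (-(N:ℤ)) < ε := by
    have : (2:ℝ) ^ (-(N:ℤ)) = (1/2 : ℝ) ^ N := by
      rw [one_div, inv_pow, ← zpow_natCast (2:ℝ), ← zpow_neg]
    rw [this]; exact hN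
  set B : Finset (ZD d) := Fintype.piFinset (fun _ => Finset.Icc (-(N:ℤ)) (N:ℤ)) with hB
  have hmemB : ∀ v : ZD d, v ∈ B ↔ normInf v ≤ N := by
    intro v
    simp only [hB, Fintype.mem_piFinset, Finset.mem_Icc, normInf, Finset.sup_le_iff,
      Finset.mem_univ, forall_true_left]
    constructor <;> intro hh i <;> have := hh i <;> omega
  set P : Finset (ZD d → ℤ) :=
    (B.pi (fun _ => A)).image (fun f v => if hv : v ∈ B then f v hv else 0) with hP
  set F : Finset (Finset (ZD d) × (ZD d → ℤ)) :=
    (P.filter (fun p => ¬ ∃ x ∈ X, PatternAppears B p x)).image (fun p => (B, p)) with hF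
  set Z : Set (Config d) := XofF A (F : Set _) with hZ
  have hXZ : X ⊆ Z := by
    intro x hx
    refine ⟨hA x hx, ?_⟩
    intro q hq hap
    simp only [hF, Finset.coe_image, Set.mem_image, Finset.mem_coe, Finset.mem_filter] at hq
    obtain ⟨p, ⟨hpP, hnap⟩, rfl⟩ := hq
    exact hnap ⟨x, hx, hap⟩
  have hZne : Z.Nonempty := hne.mono hXZ
  have hZshift : IsShift Z :=
    ⟨hZne, ⟨A, fun x hx v => hx.1 v⟩, XofF_isDeltaClosed A _,
      fun u x hx => XofF_shiftInvariant A _ u x hx⟩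
  have hclose : ∀ z ∈ Z, ∃ y ∈ X, deltaDist y z < (2:ℝ) ^ (-(N:ℤ)) := by
    intro z hz
    set p : ZD d → ℤ := fun v => if v ∈ B then z v else 0 with hp
    have hpP : p ∈ P := by
      simp only [hP, Finset.mem_image]
      refine ⟨fun v _ => z v, ?_, ?_⟩
      · rw [Finset.mem_pi]; intro v _; exact hz.1 v
      · funext v
        by_cases hv : v ∈ B <;> simp [hp, hv]
    have hap : PatternAppears B p z := by
      refine ⟨0, fun v hv => ?_⟩
      simp only [hp, if_pos hv, zero_add]
    have hex : ∃ x ∈ X, PatternAppears B p x := by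
      by_contra hcon
      refine hz.2 (B, p) ?_ hap
      simp only [hF, Finset.coe_image, Set.mem_image, Finset.mem_coe, Finset.mem_filter]
      exact ⟨p, ⟨hpP, hcon⟩, rfl⟩
    obtain ⟨x, hxX, u, hu⟩ := hex
    refine ⟨shiftMap u x, hinv u x hxX, ?_⟩
    rw [deltaDist_lt_iff]
    intro n hn
    have hnB : n ∈ B := (hmemB n).2 hn
    have hxn := hu n hnB
    simp only [hp, if_pos hnB] at hxn
    exact hxn
  haveI : Nonempty X := hne.to_subtype
  haveI : Nonempty Z := hZne.to_subtype
  have hH : deltaH X Z ≤ (2:ℝ) ^ (-(N:ℤ)) := by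
    apply max_le
    · apply ciSup_le
      intro x
      have h1 : (⨅ z : Z, deltaDist (x : Config d) (z : Config d)) ≤ 0 := by
        have := ciInf_le (f := fun z : Z => deltaDist (x : Config d) (z : Config d))
          ⟨0, by rintro _ ⟨z, rfl⟩; exact deltaDist_nonneg _ _⟩ (⟨(x : Config d), hXZ x.2⟩ : Z)
        simpa [deltaDist_self] using this
      exact h1.trans (by positivity)
    · apply ciSup_le
      intro z
      obtain ⟨y, hy, hlt⟩ := hclose z z.2
      exact le_trans (ciInf_le (f := fun x : X => deltaDist (x : Config d) (z : Config d))
        ⟨0, by rintro _ ⟨w, rfl⟩; exact deltaDist_nonneg _ _⟩ (⟨y, hy⟩ : X)) hlt.le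
  have hZX := hiso Z hZshift (lt_of_le_of_lt hH hN')
  rw [← hZX, hZ]
  exact ⟨A, F, rfl⟩
end

section
/- For every integer d > 1 and every n ∈ ℕ, there exists a d-dimensional shift of finite type having exactly n maximal subsystems; moreover, there exists a d-dimensional shift of finite type having infinitely (countably) many maximal subsystems. -/
/-! The examples are essentially one-dimensional: a nearest-neighbour condition along one
coordinate direction, together with invariance along all the others, is a finite type condition.
In the shift made of the constant points `0`, `1` and the walls `… 0 0 w 1 1 …` with
`2 ≤ w ≤ n + 1`, the configurations containing the symbol `w` form a single orbit, so forbidding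
`w` leaves a maximal subsystem. A maximal subsystem must miss some wall type, since the closure of
any wall orbit contains both constant points; hence there are exactly `n` of them. Replacing the
walls by the plateaus `… 0 0 2 4^m 3 1 1 …` gives one maximal subsystem for every `m ≥ 1`.
Conversely, every maximal subsystem of a shift is obtained by forbidding a single pattern, so
there are only countably many. The case `n = 0` is the one-point shift. -/

variable {d : ℕ}

lemma natAbs_le_normInf (v : ZD d) (i : Fin d) : (v i).natAbs ≤ normInf v :=
  Finset.le_sup (f := fun i => (v i).natAbs) (Finset.mem_univ i)

lemma normInf_le_iff {v : ZD d} {k : ℕ} : normInf v ≤ k ↔ ∀ i, (v i).natAbs ≤ k := by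
  simp [normInf, Finset.sup_le_iff]

lemma eq_of_deltaDist_lt {x y : Config d} {k : ℕ} (h : deltaDist x y < 2 ^ (-(k : ℤ)))
    {v : ZD d} (hv : normInf v ≤ k) : x v = y v := by
  by_contra hne
  have hxy : x ≠ y := fun h => hne (h ▸ rfl)
  rw [deltaDist, if_neg hxy] at h
  set S := {m : ℕ | ∃ n : ZD d, normInf n = m ∧ x n ≠ y n}
  have hinf : sInf S ≤ k := (Nat.sInf_le (show normInf v ∈ S from ⟨v, rfl, hne⟩)).trans hv
  have := zpow_le_zpow_right₀ (one_le_two (α := ℝ)) (neg_le_neg (Int.ofNat_le.mpr hinf))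
  linarith

lemma deltaDist_lt_of_eqOn {x y : Config d} {k : ℕ} (h : ∀ v, normInf v ≤ k → x v = y v) :
    deltaDist x y < 2 ^ (-(k : ℤ)) := by
  rw [deltaDist]
  split_ifs with hxy
  · positivity
  · set S := {m : ℕ | ∃ n : ZD d, normInf n = m ∧ x n ≠ y n}
    obtain ⟨n, hn⟩ := Function.ne_iff.mp hxy
    obtain ⟨w, hw, hwne⟩ := Nat.sInf_mem (show S.Nonempty from ⟨normInf n, n, rfl, hn⟩)
    have : k < sInf S := by
      rw [← hw]; by_contra hle; exact hwne (h w (not_lt.mp hle))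
    exact zpow_lt_zpow_right₀ one_lt_two (by omega)

lemma mem_deltaClosure_iff {A : Set (Config d)} {x : Config d} :
    x ∈ deltaClosure A ↔ ∀ k : ℕ, ∃ a ∈ A, ∀ v, normInf v ≤ k → x v = a v := by
  constructor
  · intro h k
    obtain ⟨a, ha, hxa⟩ := h (2 ^ (-(k : ℤ))) (by positivity)
    exact ⟨a, ha, fun v hv => eq_of_deltaDist_lt hxa hv⟩
  · intro h ε hε
    obtain ⟨k, hk⟩ := exists_pow_lt_of_lt_one hε (by norm_num : (2⁻¹ : ℝ) < 1)
    obtain ⟨a, ha, hxa⟩ := h k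
    refine ⟨a, ha, (deltaDist_lt_of_eqOn hxa).trans_le ?_⟩
    rw [zpow_neg, zpow_natCast, ← inv_pow]
    exact hk.le

lemma deltaClosure_mono {A B : Set (Config d)} (h : A ⊆ B) : deltaClosure A ⊆ deltaClosure B :=
  fun _ hx ε hε => (hx ε hε).imp fun _ ⟨ha, hd⟩ => ⟨h ha, hd⟩

lemma patternAppears_of_shiftMap {U : Finset (ZD d)} {p : ZD d → ℤ} {u : ZD d} {x : Config d}
    (h : PatternAppears U p (shiftMap u x)) : PatternAppears U p x := by
  obtain ⟨w, hw⟩ := h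
  exact ⟨u + w, fun v hv => by rw [add_assoc]; exact hw v hv⟩

lemma patternAppears_congr {U : Finset (ZD d)} {p q : ZD d → ℤ} (h : ∀ v ∈ U, p v = q v)
    {x : Config d} : PatternAppears U p x ↔ PatternAppears U q x :=
  exists_congr fun u => forall₂_congr fun v hv => by rw [h v hv]

lemma patternAppears_singleton_iff {p : ZD d → ℤ} {x : Config d} :
    PatternAppears {0} p x ↔ ∃ v, x v = p 0 := by
  simp [PatternAppears]

lemma patternAppears_of_eqOn_ball {U : Finset (ZD d)} {p : ZD d → ℤ} {x y : Config d} {u : ZD d}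
    (hx : ∀ v ∈ U, x (u + v) = p v)
    (hxy : ∀ v, normInf v ≤ U.sup (fun w => normInf (u + w)) → x v = y v) :
    PatternAppears U p y :=
  ⟨u, fun v hv => (hxy (u + v) (Finset.le_sup (f := fun w => normInf (u + w)) hv)).symm.trans
    (hx v hv)⟩

lemma isDeltaClosed_XofF (A : Finset ℤ) (F : Set (Finset (ZD d) × (ZD d → ℤ))) :
    IsDeltaClosed (XofF A F) := by
  intro y hy
  rw [mem_deltaClosure_iff] at hy
  constructor
  · intro v
    obtain ⟨a, ha, hya⟩ := hy (normInf v)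
    exact hya v le_rfl ▸ ha.1 v
  · rintro q hq ⟨u, hu⟩
    obtain ⟨a, ha, hya⟩ := hy (q.1.sup fun w => normInf (u + w))
    exact ha.2 q hq (patternAppears_of_eqOn_ball hu hya)

lemma shiftMap_mem_XofF {A : Finset ℤ} {F : Set (Finset (ZD d) × (ZD d → ℤ))} (u : ZD d)
    {x : Config d} (hx : x ∈ XofF A F) : shiftMap u x ∈ XofF A F :=
  ⟨fun v => hx.1 (u + v), fun q hq h => hx.2 q hq (patternAppears_of_shiftMap h)⟩

lemma isShift_XofF {A : Finset ℤ} {F : Set (Finset (ZD d) × (ZD d → ℤ))}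
    (hne : (XofF A F).Nonempty) : IsShift (XofF A F) :=
  ⟨hne, ⟨A, fun _ hx => hx.1⟩, isDeltaClosed_XofF A F, fun u _ hx => shiftMap_mem_XofF u hx⟩

lemma subsingleton_XofF_singleton (a : ℤ) (F : Set (Finset (ZD d) × (ZD d → ℤ))) :
    (XofF {a} F).Subsingleton :=
  fun _ hx _ hy => funext fun v => (Finset.mem_singleton.mp (hx.1 v)).trans
    (Finset.mem_singleton.mp (hy.1 v)).symm

lemma shiftMap_shiftMap (u t : ZD d) (x : Config d) :
    shiftMap u (shiftMap t x) = shiftMap (t + u) x := by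
  funext v; simp [shiftMap, add_assoc]

lemma mem_orbit_comm {x y : Config d} (h : y ∈ orbit x) : x ∈ orbit y := by
  obtain ⟨u, rfl⟩ := h
  exact ⟨-u, by rw [shiftMap_shiftMap, add_neg_cancel]; funext v; simp [shiftMap]⟩

lemma IsSubsystem.orbit_subset {Z X : Set (Config d)} (hZ : IsSubsystem Z X) {x : Config d}
    (hx : x ∈ Z) : orbit x ⊆ Z := by
  rintro _ ⟨u, rfl⟩
  exact hZ.2.2.2 u x hx

section PatternFree

def patternFree (X : Set (Config d)) (U : Finset (ZD d)) (p : ZD d → ℤ) : Set (Config d) :=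
  {x | x ∈ X ∧ ¬ PatternAppears U p x}

variable {X Z : Set (Config d)} {U : Finset (ZD d)} {p : ZD d → ℤ}

lemma patternFree_congr {q : ZD d → ℤ} (h : ∀ v ∈ U, p v = q v) :
    patternFree X U p = patternFree X U q := by
  simp only [patternFree, patternAppears_congr h]

lemma isSubsystem_patternFree (hX : IsShift X) (hne : (patternFree X U p).Nonempty) :
    IsSubsystem (patternFree X U p) X := by
  refine ⟨hne, fun _ hx => hx.1, ?_, fun u x hx => ⟨hX.2.2.2 u x hx.1,
    fun h => hx.2 (patternAppears_of_shiftMap h)⟩⟩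
  intro y hy
  refine ⟨hX.2.2.1 (deltaClosure_mono (fun _ hx => hx.1) hy), ?_⟩
  rintro ⟨u, hu⟩
  rw [mem_deltaClosure_iff] at hy
  obtain ⟨a, ha, hya⟩ := hy (U.sup fun w => normInf (u + w))
  exact ha.2 (patternAppears_of_eqOn_ball hu hya)

lemma patternFree_ne {x : Config d} (hx : x ∈ X) (hp : PatternAppears U p x) :
    patternFree X U p ≠ X :=
  fun h => (h.symm ▸ hx : x ∈ patternFree X U p).2 hp

lemma IsMaximalSubsystem.eq_of_subset (hZ : IsMaximalSubsystem Z X) {M : Set (Config d)}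
    (hM : IsSubsystem M X) (hMX : M ≠ X) (hZM : Z ⊆ M) : Z = M :=
  hZM.eq_or_ssubset.resolve_right fun h => hMX (hZ.2.2 M hM h)

lemma isMaximalSubsystem_patternFree (hX : IsShift X) (hne : (patternFree X U p).Nonempty)
    {x₀ : Config d} (hx₀ : x₀ ∈ X) (hp₀ : PatternAppears U p x₀)
    (horbit : ∀ y ∈ X, PatternAppears U p y → y ∈ orbit x₀) :
    IsMaximalSubsystem (patternFree X U p) X := by
  refine ⟨isSubsystem_patternFree hX hne, patternFree_ne hx₀ hp₀, fun Z' hZ' hlt => ?_⟩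
  obtain ⟨y, hyZ', hy⟩ := Set.exists_of_ssubset hlt
  have hyX := hZ'.2.1 hyZ'
  have hyp : PatternAppears U p y := not_not.mp fun h => hy ⟨hyX, h⟩
  have hx₀Z' : x₀ ∈ Z' := hZ'.orbit_subset hyZ' (mem_orbit_comm (horbit y hyX hyp))
  refine hZ'.2.1.antisymm fun x hx => ?_
  by_cases hxp : PatternAppears U p x
  · exact hZ'.orbit_subset hx₀Z' (horbit x hx hxp)
  · exact hlt.1 ⟨hx, hxp⟩

/-- A point outside the closed set `Z` carries a central pattern that `Z` avoids everywhere. -/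
lemma IsMaximalSubsystem.exists_eq_patternFree (hX : IsShift X) (hZ : IsMaximalSubsystem Z X) :
    ∃ (U : Finset (ZD d)) (p : ZD d → ℤ), Z = patternFree X U p := by
  obtain ⟨x, hxX, hxZ⟩ := Set.exists_of_ssubset (hZ.1.2.1.ssubset_of_ne hZ.2.1)
  have hxcl : x ∉ deltaClosure Z := fun h => hxZ (hZ.1.2.2.1 h)
  simp only [mem_deltaClosure_iff, not_forall, not_exists, not_and] at hxcl
  obtain ⟨k, hk⟩ := hxcl
  let U : Finset (ZD d) := Fintype.piFinset fun _ => Finset.Icc (-(k : ℤ)) k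
  have hU : ∀ v, v ∈ U ↔ normInf v ≤ k := fun v => by
    simp only [U, Fintype.mem_piFinset, Finset.mem_Icc, normInf_le_iff]
    exact forall_congr' fun i => by omega
  have hZsub : Z ⊆ patternFree X U x := by
    refine fun z hz => ⟨hZ.1.2.1 hz, fun ⟨u, hu⟩ => ?_⟩
    obtain ⟨v, hv, hne⟩ := hk _ (hZ.1.2.2.2 u z hz)
    exact hne (hu v ((hU v).mpr hv)).symm
  have hxp : PatternAppears U x x := ⟨0, fun v _ => by rw [zero_add]⟩
  exact ⟨U, x, hZ.eq_of_subset (isSubsystem_patternFree hX (hZ.1.1.mono hZsub))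
    (patternFree_ne hxX hxp) hZsub⟩

theorem countable_setOf_isMaximalSubsystem (hX : IsShift X) :
    {Z : Set (Config d) | IsMaximalSubsystem Z X}.Countable := by
  classical
  refine (Set.countable_range fun q : Finset (ZD d) × (ZD d →₀ ℤ) =>
    patternFree X q.1 q.2).mono fun Z hZ => ?_
  obtain ⟨U, p, rfl⟩ := IsMaximalSubsystem.exists_eq_patternFree hX hZ
  exact ⟨(U, Finsupp.indicator U fun v _ => p v),
    patternFree_congr fun v hv => Finsupp.indicator_of_mem (s := U) hv fun v _ => p v⟩

lemma setOf_isMaximalSubsystem_eq_empty (hX : X.Subsingleton) :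
    {Z : Set (Config d) | IsMaximalSubsystem Z X} = ∅ :=
  Set.eq_empty_of_forall_notMem fun Z hZ => by
    obtain ⟨⟨⟨z, hz⟩, hZX, -⟩, hne, -⟩ := hZ
    exact hne (hZX.antisymm fun x hx => hX (hZX hz) hx ▸ hz)

end PatternFree

def lineCfg (i : Fin d) (g : ℤ → ℤ) : Config d := fun v => g (v i)

lemma shiftMap_lineCfg (u : ZD d) (i : Fin d) (g : ℤ → ℤ) :
    shiftMap u (lineCfg i g) = lineCfg i fun t => g (u i + t) := rfl

lemma lineCfg_mem_orbit {i : Fin d} {g h : ℤ → ℤ} {c : ℤ} (hgh : ∀ t, g (c + t) = h t) :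
    lineCfg i g ∈ orbit (lineCfg i h) :=
  ⟨Pi.single i (-c), funext fun v => by
    simp only [shiftMap_lineCfg, Pi.single_eq_same, lineCfg, ← hgh, add_neg_cancel_left]⟩

lemma const_mem_deltaClosure_orbit_lineCfg (i : Fin d) {g : ℤ → ℤ} {a : ℤ}
    (hg : ∀ k : ℕ, ∃ c, ∀ t : ℤ, t.natAbs ≤ k → g (c + t) = a) :
    (fun _ => a : Config d) ∈ deltaClosure (orbit (lineCfg i g)) := by
  rw [mem_deltaClosure_iff]
  intro k
  obtain ⟨c, hc⟩ := hg k
  refine ⟨_, ⟨Pi.single i c, rfl⟩, fun v hv => ?_⟩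
  simp [shiftMap_lineCfg, lineCfg, hc _ ((natAbs_le_normInf v i).trans hv)]

def periods (x : Config d) : AddSubgroup (ZD d) where
  carrier := {u | ∀ v, x (v + u) = x v}
  add_mem' {a b} ha hb v := by rw [← add_assoc, hb, ha]
  zero_mem' v := by rw [add_zero]
  neg_mem' {a} ha v := by rw [← ha (v + -a), neg_add_cancel_right]

lemma eq_lineCfg_of_forall_ne {x : Config d} {i₀ : Fin d}
    (h : ∀ v, ∀ i ≠ i₀, x (v + Pi.single i 1) = x v) :
    x = lineCfg i₀ fun t => x (Pi.single i₀ t) := by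
  have hsingle : ∀ i c, i ≠ i₀ → Pi.single i c ∈ periods x := fun i c hi => by
    have := zsmul_mem (show Pi.single i 1 ∈ periods x from fun v => h v i hi) c
    rwa [← Pi.single_smul, smul_eq_mul, mul_one] at this
  funext v
  have hv : v - Pi.single i₀ (v i₀) ∈ periods x := by
    have hsum := Finset.univ_sum_single (v - Pi.single i₀ (v i₀))
    rw [← hsum]
    refine AddSubgroup.sum_mem _ fun i _ => ?_
    by_cases hi : i = i₀
    · subst hi; simp
    · exact hsingle i _ hi
  simpa [lineCfg] using hv (Pi.single i₀ (v i₀))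

lemma patternAppears_lineCfg_iff {i : Fin d} (S : Finset ℤ) (g h : ℤ → ℤ) :
    PatternAppears (S.image (Pi.single i)) (lineCfg i h) (lineCfg i g) ↔
      ∃ c, ∀ t ∈ S, g (c + t) = h t := by
  simp only [PatternAppears, Finset.forall_mem_image, lineCfg, Pi.add_apply, Pi.single_eq_same]
  exact ⟨fun ⟨u, hu⟩ => ⟨u i, hu⟩, fun ⟨c, hc⟩ => ⟨Pi.single i c, by simpa using hc⟩⟩

def pairPat (i : Fin d) (a b : ℤ) : Finset (ZD d) × (ZD d → ℤ) :=
  ({0, Pi.single i 1}, fun v => if v = 0 then a else b)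

lemma patternAppears_pairPat_iff {i : Fin d} {a b : ℤ} {x : Config d} :
    PatternAppears (pairPat i a b).1 (pairPat i a b).2 x ↔
      ∃ u, x u = a ∧ x (u + Pi.single i 1) = b := by
  have hne : (Pi.single i 1 : ZD d) ≠ 0 := by simp
  simp [PatternAppears, pairPat, hne]

open Classical in
noncomputable def pairF (i₀ : Fin d) (A : Finset ℤ) (R : ℤ → ℤ → Prop) :
    Finset (Finset (ZD d) × (ZD d → ℤ)) :=
  ((A ×ˢ A).filter fun ab => ¬ R ab.1 ab.2).image (fun ab => pairPat i₀ ab.1 ab.2)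
  ∪ ((Finset.univ.erase i₀) ×ˢ ((A ×ˢ A).filter fun ab => ab.1 ≠ ab.2)).image
      (fun q => pairPat q.1 q.2.1 q.2.2)

noncomputable def lineShift (i₀ : Fin d) (A : Finset ℤ) (R : ℤ → ℤ → Prop) : Set (Config d) :=
  XofF A (pairF i₀ A R : Set (Finset (ZD d) × (ZD d → ℤ)))

lemma isSFT_lineShift (i₀ : Fin d) (A : Finset ℤ) (R : ℤ → ℤ → Prop) :
    IsSFT (lineShift i₀ A R) :=
  ⟨A, pairF i₀ A R, rfl⟩

lemma mem_lineShift_iff {i₀ : Fin d} {A : Finset ℤ} {R : ℤ → ℤ → Prop}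
    (hRA : ∀ a b, R a b → a ∈ A) {x : Config d} :
    x ∈ lineShift i₀ A R ↔ ∃ g : ℤ → ℤ, (∀ t, R (g t) (g (t + 1))) ∧ x = lineCfg i₀ g := by
  classical
  constructor
  · rintro ⟨hA, hF⟩
    have hR : ∀ v, R (x v) (x (v + Pi.single i₀ 1)) := fun v => by
      by_contra hR
      refine hF (pairPat i₀ (x v) (x (v + Pi.single i₀ 1))) ?_
        (patternAppears_pairPat_iff.mpr ⟨v, rfl, rfl⟩)
      exact Finset.mem_union_left _ (Finset.mem_image.mpr
        ⟨(x v, x (v + Pi.single i₀ 1)), by simp [hA, hR], rfl⟩)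
    have hinv : ∀ v, ∀ i ≠ i₀, x (v + Pi.single i 1) = x v := fun v i hi => by
      by_contra hne
      refine hF (pairPat i (x v) (x (v + Pi.single i 1))) ?_
        (patternAppears_pairPat_iff.mpr ⟨v, rfl, rfl⟩)
      exact Finset.mem_union_right _ (Finset.mem_image.mpr
        ⟨(i, x v, x (v + Pi.single i 1)), by simp [hi, hA, Ne.symm hne], rfl⟩)
    refine ⟨fun t => x (Pi.single i₀ t), fun t => ?_, eq_lineCfg_of_forall_ne hinv⟩
    simpa [← Pi.single_add] using hR (Pi.single i₀ t)
  · rintro ⟨g, hR, rfl⟩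
    refine ⟨fun v => hRA _ _ (hR (v i₀)), fun q hq happ => ?_⟩
    rcases Finset.mem_union.mp hq with hq | hq
    · obtain ⟨⟨a, b⟩, hab, rfl⟩ := Finset.mem_image.mp hq
      obtain ⟨u, rfl, rfl⟩ := patternAppears_pairPat_iff.mp happ
      exact (Finset.mem_filter.mp hab).2 (by simpa [lineCfg] using hR (u i₀))
    · obtain ⟨⟨i, a, b⟩, hiab, rfl⟩ := Finset.mem_image.mp hq
      obtain ⟨u, ha, hb⟩ := patternAppears_pairPat_iff.mp happ
      simp only [Finset.mem_product, Finset.mem_erase, Finset.mem_filter] at hiab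
      refine hiab.2.2 (ha.symm.trans (Eq.trans ?_ hb))
      simp [lineCfg, hiab.1.1.symm]

section Chains

variable {R : ℤ → ℤ → Prop} {g : ℤ → ℤ} {a t₀ : ℤ}

lemma eq_of_le_of_chain (hg : ∀ t, R (g t) (g (t + 1))) (hR : ∀ b, R b a → b = a)
    (h₀ : g t₀ = a) : ∀ t ≤ t₀, g t = a := by
  intro t ht
  induction t, ht using Int.leInductionDown with
  | base => exact h₀
  | pred t _ ih => exact hR _ (by simpa [ih] using hg (t - 1))

lemma eq_of_ge_of_chain (hg : ∀ t, R (g t) (g (t + 1))) (hR : ∀ b, R a b → b = a)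
    (h₀ : g t₀ = a) : ∀ t, t₀ ≤ t → g t = a := by
  intro t ht
  induction t, ht using Int.leInduction with
  | base => exact h₀
  | succ t _ ih => exact hR _ (ih ▸ hg t)

end Chains

section WallShift

/-- The adjacent pairs of the words `… 0 0 w 1 1 …` with `2 ≤ w ≤ n + 1`. -/
def wallRel (n : ℕ) (a b : ℤ) : Prop :=
  (a = 0 ∧ b = 0) ∨ (a = 1 ∧ b = 1) ∨ (a = 0 ∧ 2 ≤ b ∧ b ≤ n + 1) ∨ (2 ≤ a ∧ a ≤ n + 1 ∧ b = 1)

def wall (w t : ℤ) : ℤ := if t < 0 then 0 else if t = 0 then w else 1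

noncomputable def wallShift (i₀ : Fin d) (n : ℕ) : Set (Config d) :=
  lineShift i₀ (Finset.Icc 0 (n + 1)) (wallRel n)

variable {i₀ : Fin d} {n : ℕ} {g : ℤ → ℤ}

lemma eq_wall_of_chain (hg : ∀ t, wallRel n (g t) (g (t + 1))) {s : ℤ} (hs : 2 ≤ g s) :
    ∀ t, g (s + t) = wall (g s) t := by
  have hleft : ∀ t ≤ s - 1, g t = 0 :=
    eq_of_le_of_chain hg (fun b h => by unfold wallRel at h; omega)
      (by have h := hg (s - 1); rw [sub_add_cancel] at h; unfold wallRel at h; omega)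
  have hright : ∀ t, s + 1 ≤ t → g t = 1 :=
    eq_of_ge_of_chain hg (fun b h => by unfold wallRel at h; omega)
      (by have h := hg s; unfold wallRel at h; omega)
  intro t
  unfold wall
  split_ifs with h₁ h₂
  · exact hleft _ (by omega)
  · rw [h₂, add_zero]
  · exact hright _ (by omega)

lemma eq_const_of_chain (hg : ∀ t, wallRel n (g t) (g (t + 1))) (h : ∀ t, g t ≤ 1) :
    ∀ t, g t = g 0 := by
  have hstep : ∀ t, g t = g (t + 1) := fun t => by
    have := hg t; have := h t; have := h (t + 1); unfold wallRel at *; omega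
  intro t
  rcases le_total t 0 with ht | ht
  · exact eq_of_le_of_chain hstep (fun _ hb => hb) rfl t ht
  · exact eq_of_ge_of_chain hstep (fun _ hb => hb.symm) rfl t ht

lemma mem_wallShift_iff_chain {x : Config d} :
    x ∈ wallShift i₀ n ↔ ∃ g : ℤ → ℤ, (∀ t, wallRel n (g t) (g (t + 1))) ∧ x = lineCfg i₀ g :=
  mem_lineShift_iff fun a b h => by unfold wallRel at h; rw [Finset.mem_Icc]; omega

lemma lineCfg_wall_mem_wallShift {w : ℤ} (hw : w ∈ Set.Icc (2 : ℤ) (n + 1)) :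
    lineCfg i₀ (wall w) ∈ wallShift i₀ n :=
  mem_wallShift_iff_chain.mpr ⟨_, fun t => by unfold wallRel wall; grind, rfl⟩

lemma patternAppears_wall (w : ℤ) : PatternAppears {0} (fun _ => w) (lineCfg i₀ (wall w)) :=
  patternAppears_singleton_iff.mpr ⟨0, by simp [lineCfg, wall]⟩

lemma const_mem_wallShift {a : ℤ} (ha : a = 0 ∨ a = 1) : (fun _ => a) ∈ wallShift i₀ n :=
  mem_wallShift_iff_chain.mpr ⟨fun _ => a, fun _ => by show wallRel n a a; unfold wallRel; omega,
    rfl⟩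

lemma isShift_wallShift : IsShift (wallShift i₀ n) :=
  isShift_XofF ⟨_, const_mem_wallShift (Or.inl rfl)⟩

lemma mem_orbit_wall_of_apply_eq {x : Config d} (hx : x ∈ wallShift i₀ n) {v : ZD d}
    (hv : 2 ≤ x v) : x ∈ orbit (lineCfg i₀ (wall (x v))) := by
  obtain ⟨g, hg, rfl⟩ := mem_wallShift_iff_chain.mp hx
  exact lineCfg_mem_orbit (eq_wall_of_chain hg hv)

lemma mem_wallShift_iff {x : Config d} :
    x ∈ wallShift i₀ n ↔ x = (fun _ => 0) ∨ x = (fun _ => 1) ∨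
      ∃ w ∈ Set.Icc (2 : ℤ) (n + 1), x ∈ orbit (lineCfg i₀ (wall w)) := by
  constructor
  · intro hx
    obtain ⟨g, hg, rfl⟩ := mem_wallShift_iff_chain.mp hx
    by_cases hw : ∃ t, 2 ≤ g t
    · obtain ⟨t, ht⟩ := hw
      have := hg t
      unfold wallRel at this
      exact Or.inr (Or.inr ⟨g t, ⟨ht, by omega⟩, lineCfg_mem_orbit (eq_wall_of_chain hg ht)⟩)
    · push Not at hw
      have hconst : lineCfg i₀ g = fun _ => g 0 :=
        funext fun v => eq_const_of_chain hg (fun t => by have := hw t; omega) (v i₀)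
      have h01 : g 0 = 0 ∨ g 0 = 1 := by
        have := hg 0; have := hw 0; unfold wallRel at *; omega
      rw [hconst]
      rcases h01 with h | h <;> simp [h]
  · rintro (rfl | rfl | ⟨w, hw, u, rfl⟩)
    · exact const_mem_wallShift (Or.inl rfl)
    · exact const_mem_wallShift (Or.inr rfl)
    · exact shiftMap_mem_XofF u (lineCfg_wall_mem_wallShift hw)

lemma isMaximalSubsystem_wallShift {w : ℤ} (hw : w ∈ Set.Icc (2 : ℤ) (n + 1)) :
    IsMaximalSubsystem (patternFree (wallShift i₀ n) {0} fun _ => w) (wallShift i₀ n) := by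
  have hw2 : 2 ≤ w := hw.1
  refine isMaximalSubsystem_patternFree isShift_wallShift
    ⟨_, const_mem_wallShift (Or.inl rfl), ?_⟩ (lineCfg_wall_mem_wallShift hw)
    (patternAppears_wall w) fun y hy hp => ?_
  · rw [patternAppears_singleton_iff]
    rintro ⟨v, hv⟩
    omega
  · obtain ⟨v, rfl⟩ := patternAppears_singleton_iff.mp hp
    exact mem_orbit_wall_of_apply_eq hy hw2

lemma eq_wallShift_of_forall_apply_eq (hn : 1 ≤ n) {Z : Set (Config d)}
    (hZ : IsSubsystem Z (wallShift i₀ n))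
    (h : ∀ w ∈ Set.Icc (2 : ℤ) (n + 1), ∃ z ∈ Z, ∃ v, z v = w) : Z = wallShift i₀ n := by
  have horbit : ∀ w ∈ Set.Icc (2 : ℤ) (n + 1), orbit (lineCfg i₀ (wall w)) ⊆ Z := by
    intro w hw
    obtain ⟨z, hz, v, rfl⟩ := h w hw
    exact hZ.orbit_subset (hZ.orbit_subset hz
      (mem_orbit_comm (mem_orbit_wall_of_apply_eq (hZ.2.1 hz) hw.1)))
  have hclosure : deltaClosure (orbit (lineCfg i₀ (wall 2))) ⊆ Z :=
    (deltaClosure_mono (horbit 2 ⟨le_rfl, by omega⟩)).trans hZ.2.2.1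
  refine hZ.2.1.antisymm fun x hx => ?_
  rcases mem_wallShift_iff.mp hx with rfl | rfl | ⟨w, hw, hx⟩
  · refine hclosure (const_mem_deltaClosure_orbit_lineCfg i₀ fun k => ⟨-(k + 1), fun t ht => ?_⟩)
    simp only [wall]; split_ifs <;> omega
  · refine hclosure (const_mem_deltaClosure_orbit_lineCfg i₀ fun k => ⟨k + 1, fun t ht => ?_⟩)
    simp only [wall]; split_ifs <;> omega
  · exact horbit w hw hx

lemma setOf_isMaximalSubsystem_wallShift (hn : 1 ≤ n) :
    {Z : Set (Config d) | IsMaximalSubsystem Z (wallShift i₀ n)} =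
      (fun w => patternFree (wallShift i₀ n) {0} fun _ => w) '' Set.Icc 2 (n + 1) := by
  refine Set.Subset.antisymm (fun Z hZ => ?_) ?_
  · by_contra hnot
    refine hZ.2.1 (eq_wallShift_of_forall_apply_eq hn hZ.1 fun w hw => ?_)
    by_contra hfree
    have hsub : Z ⊆ patternFree (wallShift i₀ n) {0} fun _ => w := fun z hz =>
      ⟨hZ.1.2.1 hz, fun hp => hfree ⟨z, hz, patternAppears_singleton_iff.mp hp⟩⟩
    have hmax := isMaximalSubsystem_wallShift (i₀ := i₀) hw
    exact hnot ⟨w, hw, (hZ.eq_of_subset hmax.1 hmax.2.1 hsub).symm⟩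
  · rintro _ ⟨w, hw, rfl⟩
    exact isMaximalSubsystem_wallShift hw

lemma injOn_patternFree_wallShift :
    Set.InjOn (fun w => patternFree (wallShift i₀ n) {0} fun _ => w) (Set.Icc 2 (n + 1)) := by
  intro a ha b hb hab
  by_contra hne
  have hmem : lineCfg i₀ (wall b) ∈ patternFree (wallShift i₀ n) {0} fun _ => a := by
    refine ⟨lineCfg_wall_mem_wallShift hb, fun hp => ?_⟩
    obtain ⟨v, hv⟩ := patternAppears_singleton_iff.mp hp
    have := ha.1
    simp only [lineCfg, wall] at hv
    split_ifs at hv <;> omega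
  rw [show (patternFree (wallShift i₀ n) {0} fun _ => a) = _ from hab] at hmem
  exact hmem.2 (patternAppears_wall b)

lemma ncard_setOf_isMaximalSubsystem_wallShift (hn : 1 ≤ n) :
    {Z : Set (Config d) | IsMaximalSubsystem Z (wallShift i₀ n)}.ncard = n := by
  rw [setOf_isMaximalSubsystem_wallShift hn, injOn_patternFree_wallShift.ncard_image,
    ← Finset.coe_Icc, Set.ncard_coe_finset, Int.card_Icc]
  omega

end WallShift

section PlateauShift

/-- The adjacent pairs of the words `… 0 0 2 4 … 4 3 1 1 …`. -/
def plateauRel (a b : ℤ) : Prop :=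
  (a = 0 ∧ b = 0) ∨ (a = 0 ∧ b = 2) ∨ (a = 2 ∧ b = 4) ∨ (a = 4 ∧ b = 4) ∨ (a = 4 ∧ b = 3) ∨
    (a = 3 ∧ b = 1) ∨ (a = 1 ∧ b = 1)

def plateau (m : ℕ) (t : ℤ) : ℤ :=
  if t < 0 then 0 else if t = 0 then 2 else if t ≤ m then 4 else if t = m + 1 then 3 else 1

noncomputable def plateauShift (i₀ : Fin d) : Set (Config d) :=
  lineShift i₀ (Finset.Icc 0 4) plateauRel

noncomputable def plateauFree (i₀ : Fin d) (m : ℕ) : Set (Config d) :=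
  patternFree (plateauShift i₀) ((Finset.Icc (-1 : ℤ) (m + 2)).image (Pi.single i₀))
    (lineCfg i₀ (plateau m))

variable {i₀ : Fin d} {m : ℕ} {g : ℤ → ℤ}

lemma mem_plateauShift_iff_chain {x : Config d} :
    x ∈ plateauShift i₀ ↔ ∃ g : ℤ → ℤ, (∀ t, plateauRel (g t) (g (t + 1))) ∧ x = lineCfg i₀ g :=
  mem_lineShift_iff fun a b h => by unfold plateauRel at h; rw [Finset.mem_Icc]; omega

lemma zero_mem_plateauShift : lineCfg i₀ (fun _ => 0) ∈ plateauShift i₀ :=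
  mem_plateauShift_iff_chain.mpr ⟨_, fun _ => Or.inl ⟨rfl, rfl⟩, rfl⟩

lemma lineCfg_plateau_mem_plateauShift (hm : 1 ≤ m) : lineCfg i₀ (plateau m) ∈ plateauShift i₀ :=
  mem_plateauShift_iff_chain.mpr ⟨_, fun t => by unfold plateauRel plateau; split_ifs <;> omega,
    rfl⟩

lemma isShift_plateauShift : IsShift (plateauShift i₀) :=
  isShift_XofF ⟨_, zero_mem_plateauShift⟩

lemma patternAppears_plateau (i₀ : Fin d) (m : ℕ) :
    PatternAppears ((Finset.Icc (-1 : ℤ) (m + 2)).image (Pi.single i₀)) (lineCfg i₀ (plateau m))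
      (lineCfg i₀ (plateau m)) :=
  (patternAppears_lineCfg_iff _ _ _).mpr ⟨0, fun t _ => by rw [zero_add]⟩

lemma eq_plateau_of_chain (hg : ∀ t, plateauRel (g t) (g (t + 1))) {c : ℤ}
    (hc : ∀ t ∈ Finset.Icc (-1) (m + 2 : ℤ), g (c + t) = plateau m t) :
    ∀ t, g (c + t) = plateau m t := by
  have hleft : ∀ t ≤ c - 1, g t = 0 :=
    eq_of_le_of_chain hg (fun b h => by unfold plateauRel at h; omega)
      (by simpa [plateau, ← sub_eq_add_neg] using hc (-1) (Finset.mem_Icc.mpr ⟨le_rfl, by omega⟩))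
  have hright : ∀ t, c + (m + 2) ≤ t → g t = 1 :=
    eq_of_ge_of_chain hg (fun b h => by unfold plateauRel at h; omega)
      (by rw [hc (m + 2) (Finset.mem_Icc.mpr ⟨by omega, le_rfl⟩), plateau]; split_ifs <;> omega)
  intro t
  by_cases ht : t ∈ Finset.Icc (-1) (m + 2 : ℤ)
  · exact hc t ht
  · rw [Finset.mem_Icc] at ht
    unfold plateau
    split_ifs <;> first | omega | exact hleft _ (by omega) | exact hright _ (by omega)

lemma isMaximalSubsystem_plateauFree (hm : 1 ≤ m) :
    IsMaximalSubsystem (plateauFree i₀ m) (plateauShift i₀) := by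
  refine isMaximalSubsystem_patternFree isShift_plateauShift ⟨_, zero_mem_plateauShift, ?_⟩
    (lineCfg_plateau_mem_plateauShift hm) (patternAppears_plateau i₀ m) fun y hy hp => ?_
  · rw [patternAppears_lineCfg_iff]
    rintro ⟨c, hc⟩
    simpa [plateau] using hc 0 (Finset.mem_Icc.mpr ⟨by omega, by omega⟩)
  · obtain ⟨g, hg, rfl⟩ := mem_plateauShift_iff_chain.mp hy
    obtain ⟨c, hc⟩ := (patternAppears_lineCfg_iff _ _ _).mp hp
    exact lineCfg_mem_orbit (eq_plateau_of_chain hg hc)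

lemma lineCfg_plateau_mem_plateauFree {m' : ℕ} (hm' : 1 ≤ m') (hne : m ≠ m') :
    lineCfg i₀ (plateau m') ∈ plateauFree i₀ m := by
  refine ⟨lineCfg_plateau_mem_plateauShift hm', ?_⟩
  rw [patternAppears_lineCfg_iff]
  rintro ⟨c, hc⟩
  have h0 := hc 0 (Finset.mem_Icc.mpr ⟨by omega, by omega⟩)
  have h1 := hc (m + 1) (Finset.mem_Icc.mpr ⟨by omega, by omega⟩)
  simp only [plateau] at h0 h1
  split_ifs at h0 h1 <;> omega

theorem infinite_setOf_isMaximalSubsystem_plateauShift :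
    {Z : Set (Config d) | IsMaximalSubsystem Z (plateauShift i₀)}.Infinite := by
  refine Set.infinite_of_injective_forall_mem (f := fun m : ℕ => plateauFree i₀ (m + 1))
    (fun a b hab => ?_) fun m => isMaximalSubsystem_plateauFree (by omega)
  by_contra hne
  have hmem := lineCfg_plateau_mem_plateauFree (i₀ := i₀) (m := a + 1) (by omega)
    (show a + 1 ≠ b + 1 by omega)
  rw [show plateauFree i₀ (a + 1) = plateauFree i₀ (b + 1) from hab] at hmem
  exact hmem.2 (patternAppears_plateau i₀ (b + 1))

end PlateauShift

/-- For every `d > 1` and every `n ∈ ℕ`, there is a `d`-dimensional shift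
of finite type with exactly `n` maximal subsystems; moreover there is one with
infinitely (countably) many maximal subsystems. -/
theorem realization_of_all_maximality_types
    (d : ℕ) (hd : 1 < d) :
    (∀ n : ℕ, ∃ X : Set (Config d), IsShift X ∧ IsSFT X ∧
      {Z : Set (Config d) | IsMaximalSubsystem Z X}.Finite ∧
      {Z : Set (Config d) | IsMaximalSubsystem Z X}.ncard = n) ∧
    (∃ X : Set (Config d), IsShift X ∧ IsSFT X ∧
      {Z : Set (Config d) | IsMaximalSubsystem Z X}.Infinite ∧
      {Z : Set (Config d) | IsMaximalSubsystem Z X}.Countable) := by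
  let i₀ : Fin d := ⟨0, by omega⟩
  refine ⟨fun n => ?_, plateauShift i₀, isShift_plateauShift, isSFT_lineShift _ _ _,
    infinite_setOf_isMaximalSubsystem_plateauShift,
    countable_setOf_isMaximalSubsystem isShift_plateauShift⟩
  rcases Nat.eq_zero_or_pos n with rfl | hn
  · let X : Set (Config d) := XofF {0} ↑(∅ : Finset (Finset (ZD d) × (ZD d → ℤ)))
    have hX : IsShift X := isShift_XofF ⟨fun _ => 0, fun _ => Finset.mem_singleton_self 0, by simp⟩
    refine ⟨X, hX, ⟨_, _, rfl⟩, ?_⟩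
    rw [setOf_isMaximalSubsystem_eq_empty (subsingleton_XofF_singleton _ _)]
    exact ⟨Set.finite_empty, Set.ncard_empty _⟩
  · have hcard := ncard_setOf_isMaximalSubsystem_wallShift (i₀ := i₀) hn
    exact ⟨wallShift i₀ n, isShift_wallShift, isSFT_lineShift _ _ _,
      Set.finite_of_ncard_pos (by rwa [hcard]), hcard⟩
end
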